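/- Let X be a joinable uniform space with base point x₀. If the uniform fundamental pro-group {π₁(R(X,E),x₀)}_E satisfies the strong Mittag-Leffler condition, then X is uniformly joinable: for each entourage E there is an entourage F such that every pair (x,y) ∈ F can be joined by an E-short generalized path. -/

import Mathlib

/-!
Fix `E` and apply strong Mittag-Leffler to `E ∩ E⁻¹`, obtaining `F`. For `(x, y) ∈ F` choose
generalized paths `p : x₀ ⇝ x` and `q : x₀ ⇝ y`. Their `F`-terms, joined by the edge `(x, y)`,
form an `F`-loop at `x₀`, which is therefore the `E`-term of some generalized loop `g`.
Then `p⁻¹ ⬝ g ⬝ q` runs from `x` to `y`, and its `E`-term is homotopic to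
`p_F⁻¹ ⬝ p_F ⬝ q_F⁻¹ ⬝ q_F`, which contracts onto the edge `(x, y)`.
-/

open UniformSpace Filter Function
open scoped Uniformity

universe u v

variable {X : Type u} {Y : Type v}

/-- An `E`-chain: consecutive pairs belong to `E`. -/
def IsEChain (E : Set (X × X)) (l : List X) : Prop :=
  l.Chain' fun a b => (a, b) ∈ E

/-- Homotopy rel endpoints of edge-paths in the Rips complex `R(X,E)`. -/
inductive RipsHtpy (E : Set (X × X)) : List X → List X → Prop
  | refl (l : List X) : RipsHtpy E l l
  | symm {l₁ l₂ : List X} : RipsHtpy E l₁ l₂ → RipsHtpy E l₂ l₁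
  | trans {l₁ l₂ l₃ : List X} : RipsHtpy E l₁ l₂ → RipsHtpy E l₂ l₃ → RipsHtpy E l₁ l₃
  | ins (l₁ l₂ : List X) (a v b : X) :
      (a, v) ∈ E → (v, b) ∈ E → (a, b) ∈ E →
      RipsHtpy E (l₁ ++ a :: b :: l₂) (l₁ ++ a :: v :: b :: l₂)

/-- `E`-homotopy of chains (endpoints may move within `E`). -/
def EHomotopic (E : Set (X × X)) (c d : List X) : Prop :=
  ∃ xc xd yc yd : X, c.head? = some xc ∧ d.head? = some xd ∧
    c.getLast? = some yc ∧ d.getLast? = some yd ∧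
    (xc, xd) ∈ E ∧ (yc, yd) ∈ E ∧
    RipsHtpy E c (xc :: (d ++ [yc]))

/-- The image `f(E)` of a relation under `f`. -/
def fimg (f : X → Y) (E : Set (X × X)) : Set (Y × Y) := Prod.map f f '' E

/-- A generalized (uniform) path from `x` to `y`. -/
structure GenPath (X : Type u) [UniformSpace X] (x y : X) where
  c : Set (X × X) → List X
  chain : ∀ E ∈ 𝓤 X, IsEChain E (c E)
  head : ∀ E ∈ 𝓤 X, (c E).head? = some x
  last : ∀ E ∈ 𝓤 X, (c E).getLast? = some y
  compat : ∀ E ∈ 𝓤 X, ∀ F ∈ 𝓤 X, F ⊆ E → RipsHtpy E (c F) (c E)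

/-- A generalized path is `E`-short if its `E`-term is the edge `e(x,y)`. -/
def GenPath.EShort [UniformSpace X] {x y : X} (p : GenPath X x y) (E : Set (X × X)) : Prop :=
  (x, y) ∈ E ∧ RipsHtpy E (p.c E) [x, y]

/-- `X` is joinable: any two points are joined by a generalized path. -/
def Joinable (X : Type u) [UniformSpace X] : Prop :=
  ∀ x y : X, Nonempty (GenPath X x y)

/-- `X` is uniformly joinable. -/
def UniformlyJoinable (X : Type u) [UniformSpace X] : Prop :=
  ∀ E ∈ 𝓤 X, ∃ F ∈ 𝓤 X, ∀ x y : X, (x, y) ∈ F → ∃ p : GenPath X x y, p.EShort E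

/-- `X` is chain connected. -/
def ChainConnected (X : Type u) [UniformSpace X] : Prop :=
  ∀ E ∈ 𝓤 X, ∀ x y : X, ∃ l : List X,
    IsEChain E l ∧ l.head? = some x ∧ l.getLast? = some y

/-- `f` generates the uniform structure of `Y`. -/
def GeneratesUS [UniformSpace X] [UniformSpace Y] (f : X → Y) : Prop :=
  (∀ S ∈ 𝓤 Y, ∃ E ∈ 𝓤 X, fimg f E ⊆ S) ∧ ∀ E ∈ 𝓤 X, fimg f E ∈ 𝓤 Y

theorem RipsHtpy.map {E : Set (X × X)} {E' : Set (Y × Y)} (f : X → Y)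
    (h : ∀ a b : X, (a, b) ∈ E → (f a, f b) ∈ E') :
    ∀ {l₁ l₂ : List X}, RipsHtpy E l₁ l₂ → RipsHtpy E' (l₁.map f) (l₂.map f) := by
  intro l₁ l₂ H
  induction H with
  | refl l => exact .refl _
  | symm _ ih => exact .symm ih
  | trans _ _ ih₁ ih₂ => exact .trans ih₁ ih₂
  | ins l₁ l₂ a v b h₁ h₂ h₃ =>
      simpa using RipsHtpy.ins (l₁.map f) (l₂.map f) (f a) (f v) (f b)
        (h a v h₁) (h v b h₂) (h a b h₃)

theorem GeneratesUS.preimage [UniformSpace X] [UniformSpace Y] {f : X → Y}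
    (hf : GeneratesUS f) : ∀ S ∈ 𝓤 Y, Prod.map f f ⁻¹' S ∈ 𝓤 X := by
  intro S hS
  obtain ⟨E, hE, hES⟩ := hf.1 S hS
  exact Filter.mem_of_superset hE fun p hp => hES ⟨p, hp, rfl⟩

/-- The pushforward of a generalized path along a map inducing the uniformity. -/
def GenPath.map [UniformSpace X] [UniformSpace Y] (f : X → Y)
    (hf : ∀ S ∈ 𝓤 Y, Prod.map f f ⁻¹' S ∈ 𝓤 X) {x y : X} (p : GenPath X x y) :
    GenPath Y (f x) (f y) where
  c := fun F => (p.c (Prod.map f f ⁻¹' F)).map f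
  chain := fun F hF => List.isChain_map_of_isChain f (fun a b hab => hab) (p.chain _ (hf F hF))
  head := fun F hF => by
    rw [List.head?_map, p.head _ (hf F hF)]; rfl
  last := fun F hF => by
    rw [List.getLast?_map, p.last _ (hf F hF)]; rfl
  compat := fun E hE F hF hFE =>
    RipsHtpy.map f (fun a b hab => hab)
      (p.compat _ (hf E hE) _ (hf F hF) (Set.preimage_mono hFE))

/-- The space of generalized paths starting at `x₀`. -/
def GPSpace (X : Type u) [UniformSpace X] (x₀ : X) := Σ y : X, GenPath X x₀ y

/-- The endpoint projection. -/
def GPSpace.endpoint [UniformSpace X] {x₀ : X} (c : GPSpace X x₀) : X := c.1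

/-- The basic entourage `E*` on `GP(X,x₀)`. -/
def EstarGP [UniformSpace X] (x₀ : X) (E : Set (X × X)) :
    Set (GPSpace X x₀ × GPSpace X x₀) :=
  { q | EHomotopic E (q.1.2.c E) (q.2.2.c E) }

/-- The induced map on spaces of generalized paths. -/
def gpMap [UniformSpace X] [UniformSpace Y] (f : X → Y)
    (hf : ∀ S ∈ 𝓤 Y, Prod.map f f ⁻¹' S ∈ 𝓤 X) (x₀ : X) :
    GPSpace X x₀ → GPSpace Y (f x₀) :=
  fun c => ⟨f c.1, c.2.map f hf⟩

namespace IsEChain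

variable {E F : Set (X × X)} {l m : List X}

theorem mono (h : IsEChain E l) (hEF : E ⊆ F) : IsEChain F l :=
  List.IsChain.imp (fun _ _ hab => hEF hab) h

theorem reverse (h : IsEChain E l) : IsEChain (SetRel.inv E) l.reverse :=
  List.isChain_reverse.2 h

theorem append {a b : X} (hl : IsEChain E l) (hm : IsEChain E m) (ha : l.getLast? = some a)
    (hb : m.head? = some b) (hab : (a, b) ∈ E) : IsEChain E (l ++ m) :=
  List.IsChain.append hl hm fun a' ha' b' hb' => by
    obtain rfl : a = a' := by simpa [ha] using ha'
    obtain rfl : b = b' := by simpa [hb] using hb'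
    exact hab

end IsEChain

namespace RipsHtpy

variable {E F : Set (X × X)} {l₁ l₂ m₁ m₂ : List X}

theorem mono (H : RipsHtpy E l₁ l₂) (hEF : E ⊆ F) : RipsHtpy F l₁ l₂ := by
  simpa using H.map (E' := F) id fun _ _ hab => hEF hab

theorem reverse (H : RipsHtpy E l₁ l₂) : RipsHtpy (SetRel.inv E) l₁.reverse l₂.reverse := by
  induction H with
  | refl l => exact .refl _
  | symm _ ih => exact ih.symm
  | trans _ _ ih₁ ih₂ => exact ih₁.trans ih₂
  | ins m₁ m₂ a v b hav hvb hab =>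
      simpa using RipsHtpy.ins (E := SetRel.inv E) m₂.reverse m₁.reverse b v a hvb hav hab

theorem append_right (H : RipsHtpy E l₁ l₂) (m : List X) : RipsHtpy E (l₁ ++ m) (l₂ ++ m) := by
  induction H with
  | refl l => exact .refl _
  | symm _ ih => exact ih.symm
  | trans _ _ ih₁ ih₂ => exact ih₁.trans ih₂
  | ins m₁ m₂ a v b hav hvb hab => simpa using RipsHtpy.ins m₁ (m₂ ++ m) a v b hav hvb hab

theorem append_left (H : RipsHtpy E l₁ l₂) (m : List X) : RipsHtpy E (m ++ l₁) (m ++ l₂) := by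
  induction H with
  | refl l => exact .refl _
  | symm _ ih => exact ih.symm
  | trans _ _ ih₁ ih₂ => exact ih₁.trans ih₂
  | ins m₁ m₂ a v b hav hvb hab => simpa using RipsHtpy.ins (m ++ m₁) m₂ a v b hav hvb hab

theorem append (H₁ : RipsHtpy E l₁ l₂) (H₂ : RipsHtpy E m₁ m₂) :
    RipsHtpy E (l₁ ++ m₁) (l₂ ++ m₂) :=
  (H₁.append_right m₁).trans (H₂.append_left l₂)

theorem reverse_append_self [SetRel.IsRefl E] {c : List X}
    (hc : IsEChain (SetRel.symmetrize E) c) {t : X} (ht : c.getLast? = some t) :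
    RipsHtpy E (c.reverse ++ c) [t, t] := by
  induction c with
  | nil => simp at ht
  | cons a r ih =>
    cases r with
    | nil =>
      obtain rfl : a = t := by simpa using ht
      exact .refl _
    | cons b r =>
      obtain ⟨hab, hc⟩ := List.isChain_cons_cons.1 hc
      -- `… b a a b …` ⟶ `… b a b …` ⟶ `… b b …`
      have drop_a : RipsHtpy E ((b :: r).reverse ++ [a] ++ a :: b :: r)
          ((b :: r).reverse ++ a :: b :: r) := by
        simpa using (RipsHtpy.ins (b :: r).reverse r a a b (SetRel.refl E a) hab.1 hab.1).symm
      have drop_b : RipsHtpy E ((b :: r).reverse ++ a :: b :: r) ((b :: r).reverse ++ b :: r) := by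
        simpa using (RipsHtpy.ins (E := E) r.reverse r b a b hab.2 hab.1 (SetRel.refl E b)).symm
      simpa using drop_a.trans (drop_b.trans (ih hc (by simpa using ht)))

theorem double_edge [SetRel.IsRefl E] {x y : X} (hxy : (x, y) ∈ E) :
    RipsHtpy E [x, x, y, y] [x, y] :=
  (RipsHtpy.ins [] [y] x x y (SetRel.refl E x) hxy hxy).symm.trans
    (RipsHtpy.ins [] [] x y y hxy (SetRel.refl E y) hxy).symm

end RipsHtpy

namespace GenPath

variable [UniformSpace X] {x y z : X}

def symm (p : GenPath X x y) : GenPath X y x where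
  c G := (p.c (SetRel.inv G)).reverse
  chain G hG := (p.chain _ (symm_le_uniformity hG)).reverse
  head G hG := by rw [List.head?_reverse]; exact p.last _ (symm_le_uniformity hG)
  last G hG := by rw [List.getLast?_reverse]; exact p.head _ (symm_le_uniformity hG)
  compat E hE F hF hFE :=
    (p.compat _ (symm_le_uniformity hE) _ (symm_le_uniformity hF) fun _ h => hFE h).reverse

def trans (p : GenPath X x y) (q : GenPath X y z) : GenPath X x z where
  c G := p.c G ++ q.c G
  chain G hG := (p.chain G hG).append (q.chain G hG) (p.last G hG) (q.head G hG)
    (refl_mem_uniformity hG)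
  head G hG := by simp [p.head G hG]
  last G hG := by simp [q.last G hG]
  compat E hE F hF hFE := (p.compat E hE F hF hFE).append (q.compat E hE F hF hFE)

theorem ripsHtpy_symm_c (p : GenPath X x y) {E F : Set (X × X)} (hE : E ∈ 𝓤 X) (hF : F ∈ 𝓤 X)
    (hFE : F ⊆ SetRel.inv E) : RipsHtpy E (p.symm.c E) (p.c F).reverse :=
  (p.compat _ (symm_le_uniformity hE) F hF hFE).reverse.symm

theorem isEChain_c_append_c_reverse {x₀ : X} (p : GenPath X x₀ x) (q : GenPath X x₀ y)
    {F : Set (X × X)} [SetRel.IsSymm F] (hF : F ∈ 𝓤 X) (hxy : (x, y) ∈ F) :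
    IsEChain F (p.c F ++ (q.c F).reverse) := by
  have hq := (q.chain F hF).reverse
  rw [SetRel.inv_eq_self] at hq
  exact (p.chain F hF).append hq (p.last F hF) (by simpa using q.last F hF) hxy

theorem eShort_symm_trans_trans {x₀ : X} (p : GenPath X x₀ x) (q : GenPath X x₀ y)
    (g : GenPath X x₀ x₀) {E F : Set (X × X)} (hE : E ∈ 𝓤 X) (hF : F ∈ 𝓤 X)
    (hFE : F ⊆ SetRel.symmetrize E) (hxy : (x, y) ∈ E)
    (hg : RipsHtpy E (g.c E) (p.c F ++ (q.c F).reverse)) :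
    ((p.symm.trans g).trans q).EShort E := by
  have := isRefl_of_mem_uniformity hE
  have hFE' : F ⊆ E := hFE.trans SetRel.symmetrize_subset_self
  have substitute : RipsHtpy E (((p.symm.trans g).trans q).c E)
      ((p.c F).reverse ++ (p.c F ++ (q.c F).reverse) ++ q.c F) :=
    ((p.ripsHtpy_symm_c hE hF (hFE.trans SetRel.symmetrize_subset_inv)).append hg).append
      (q.compat E hE F hF hFE').symm
  have contract : RipsHtpy E ((p.c F).reverse ++ p.c F ++ ((q.c F).reverse ++ q.c F))
      ([x, x] ++ [y, y]) :=
    (RipsHtpy.reverse_append_self ((p.chain F hF).mono hFE) (p.last F hF)).append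
      (RipsHtpy.reverse_append_self ((q.chain F hF).mono hFE) (q.last F hF))
  refine ⟨hxy, substitute.trans ?_⟩
  simpa using contract.trans (RipsHtpy.double_edge hxy)

end GenPath

/-- If `X` is joinable and its uniform fundamental pro-group satisfies the strong
Mittag-Leffler condition at `x₀`, then `X` is uniformly joinable. -/
theorem uniformly_joinable_of_strong_ML [UniformSpace X] (x₀ : X)
    (hjoin : Joinable X)
    (hsml : ∀ E ∈ 𝓤 X, ∃ F ∈ 𝓤 X, F ⊆ E ∧
      ∀ l : List X, IsEChain F l → l.head? = some x₀ → l.getLast? = some x₀ →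
        ∃ g : GenPath X x₀ x₀, RipsHtpy E (g.c E) l) :
    UniformlyJoinable X := by
  intro E hE
  have hS : SetRel.symmetrize E ∈ 𝓤 X := symmetrize_mem_uniformity hE
  obtain ⟨F₀, hF₀, hF₀S, hloop⟩ := hsml _ hS
  have hF : SetRel.symmetrize F₀ ∈ 𝓤 X := symmetrize_mem_uniformity hF₀
  have hFS : SetRel.symmetrize F₀ ⊆ SetRel.symmetrize E :=
    SetRel.symmetrize_subset_self.trans hF₀S
  refine ⟨_, hF, fun x y hxy => ?_⟩
  obtain ⟨p⟩ := hjoin x₀ x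
  obtain ⟨q⟩ := hjoin x₀ y
  obtain ⟨g, hg⟩ := hloop _ ((p.isEChain_c_append_c_reverse q hF hxy).mono
    SetRel.symmetrize_subset_self) (by simp [p.head _ hF]) (by simp [q.head _ hF])
  have hgE : RipsHtpy E (g.c E) (p.c _ ++ (q.c _).reverse) :=
    (g.compat E hE _ hS SetRel.symmetrize_subset_self).symm.trans
      (hg.mono SetRel.symmetrize_subset_self)
  exact ⟨_, p.eShort_symm_trans_trans q g hE hF hFS (SetRel.symmetrize_subset_self (hFS hxy)) hgE⟩
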